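/- For k ≥ 1 and 1 ≤ s ≤ k, the number of binary words x of length 2k+1 with Z(x) = s equals C(2k+1, k-s+1), and the number with Z(x) = -s equals C(2k+1, k-s). -/

import Mathlib

/-!
Flipping the letters at the even positions is a bijection on words of length `n`, and it turns
`Z(x) + ⌊n/2⌋` into the number of 0's of the flipped word: a 0 at an odd position stays a 0, while
each of the `⌊n/2⌋` even positions contributes a 0 exactly when it did not before. Hence the words
with `Z(x) + k = m` are counted by `C(2k+1, m)`, and `C(2k+1, k+s) = C(2k+1, k-s+1)`.
-/

/-- Number of 0's (`false`) at odd positions (1-based) of a binary word. -/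
def oddZeros (x : List Bool) : ℕ :=
  ((x.zipIdx.map Prod.swap).filter (fun p => p.1 % 2 = 0 && p.2 == false)).length

/-- Number of 0's (`false`) at even positions (1-based) of a binary word. -/
def evenZeros (x : List Bool) : ℕ :=
  ((x.zipIdx.map Prod.swap).filter (fun p => p.1 % 2 = 1 && p.2 == false)).length

/-- Z(x) = odd(x) - even(x). -/
def Zw (x : List Bool) : ℤ := (oddZeros x : ℤ) - (evenZeros x : ℤ)

open Finset

lemma List.length_filter_ofFn {α : Type*} {n : ℕ} (p : α → Bool) (g : Fin n → α) :
    ((List.ofFn g).filter p).length = #{i | p (g i)} := by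
  rw [List.ofFn_eq_map, List.filter_map, List.length_map, ← List.toFinset_card_of_nodup
    ((List.nodup_finRange n).filter _), List.toFinset_filter, List.toFinset_finRange]
  rfl

lemma List.zipIdx_ofFn_map_swap {α : Type*} {n : ℕ} (x : Fin n → α) :
    (List.ofFn x).zipIdx.map Prod.swap = List.ofFn fun i => ((i : ℕ), x i) :=
  List.ext_getElem (by simp) fun i _ _ => by simp [List.getElem_zipIdx]

lemma oddZeros_ofFn {n : ℕ} (x : Fin n → Bool) :
    oddZeros (List.ofFn x) = #{i | i.val % 2 = 0 ∧ x i = false} := by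
  simp [oddZeros, List.zipIdx_ofFn_map_swap, List.length_filter_ofFn]

lemma evenZeros_ofFn {n : ℕ} (x : Fin n → Bool) :
    evenZeros (List.ofFn x) = #{i | i.val % 2 = 1 ∧ x i = false} := by
  simp [evenZeros, List.zipIdx_ofFn_map_swap, List.length_filter_ofFn]

/-- Indices are 0-based, so `i.val % 2 = 1` marks the even positions of the word. -/
def flipOdd {n : ℕ} (x : Fin n → Bool) : Fin n → Bool :=
  fun i => if i.val % 2 = 1 then !x i else x i

lemma flipOdd_involutive (n : ℕ) : Function.Involutive (flipOdd (n := n)) := fun x => by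
  funext i; by_cases h : i.val % 2 = 1 <;> simp [flipOdd, h]

lemma Fin.card_filter_val_mod_two_eq_one (n : ℕ) : #{i : Fin n | i.val % 2 = 1} = n / 2 := by
  rw [← Nat.card_multiples n 2, ← Nat.Iio_eq_range, ← Fin.map_valEmbedding_univ, filter_map,
    card_map]
  congr 1; ext i
  simp only [mem_filter, mem_univ, true_and, Fin.valEmbedding_apply, Function.comp_apply]
  omega

lemma card_false_flipOdd {n : ℕ} (x : Fin n → Bool) :
    (#{i | flipOdd x i = false} : ℤ) = Zw (List.ofFn x) + (n / 2 : ℕ) := by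
  rw [Zw, oddZeros_ofFn, evenZeros_ofFn, ← Fin.card_filter_val_mod_two_eq_one]
  simp only [natCast_card_filter, ← sum_sub_distrib, ← sum_add_distrib]
  refine sum_congr rfl fun i _ => ?_
  rcases Nat.mod_two_eq_zero_or_one i.val with h | h <;> cases hx : x i <;> simp [flipOdd, h, hx]

lemma card_filter_card_false_eq_choose (n m : ℕ) :
    #{x : Fin n → Bool | #{i | x i = false} = m} = n.choose m :=
  calc _ = #(powersetCard m (univ : Finset (Fin n))) := by
        refine card_nbij' (fun x => ({i | x i = false} : Finset _)) (fun s i => decide (i ∉ s))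
          ?_ ?_ ?_ ?_
        · intro x hx; simpa using hx
        · intro s hs; simpa using hs
        · intro x _; funext i; simp
        · intro s _; ext i; simp
    _ = n.choose m := by simp

lemma card_filter_Zw_add_half_eq_choose (n m : ℕ) :
    #{x : Fin n → Bool | Zw (List.ofFn x) + (n / 2 : ℕ) = m} = n.choose m := by
  rw [← card_filter_card_false_eq_choose]
  refine card_equiv (flipOdd_involutive n).toPerm fun x => ?_
  have := card_false_flipOdd x
  simp only [mem_filter, mem_univ, true_and, Function.Involutive.coe_toPerm]
  omega

theorem card_Z_eq_s_odd_length_general (k s : ℕ) (hsk : s ≤ k) :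
    (Finset.univ.filter (fun x : Fin (2 * k + 1) → Bool => Zw (List.ofFn x) = (s : ℤ))).card =
      Nat.choose (2 * k + 1) (k - s + 1) ∧
    (Finset.univ.filter (fun x : Fin (2 * k + 1) → Bool => Zw (List.ofFn x) = -(s : ℤ))).card =
      Nat.choose (2 * k + 1) (k - s) := by
  have card_Zw_eq (t : ℤ) (m : ℕ) (h : t + k = m) :
      #{x : Fin (2 * k + 1) → Bool | Zw (List.ofFn x) = t} = (2 * k + 1).choose m := by
    rw [← card_filter_Zw_add_half_eq_choose, show (2 * k + 1) / 2 = k by omega]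
    congr 1; ext x; simp only [mem_filter, mem_univ, true_and]; omega
  exact ⟨(card_Zw_eq s (k + s) (by push_cast; ring)).trans (Nat.choose_symm_of_eq_add (by omega)),
    card_Zw_eq (-s) (k - s) (by omega)⟩

theorem card_Z_eq_s_odd_length (k s : ℕ) (hk : 1 ≤ k) (hs1 : 1 ≤ s) (hsk : s ≤ k) :
    (Finset.univ.filter (fun x : Fin (2 * k + 1) → Bool => Zw (List.ofFn x) = (s : ℤ))).card =
      Nat.choose (2 * k + 1) (k - s + 1) ∧
    (Finset.univ.filter (fun x : Fin (2 * k + 1) → Bool => Zw (List.ofFn x) = -(s : ℤ))).card =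
      Nat.choose (2 * k + 1) (k - s) :=
  card_Z_eq_s_odd_length_general k s hsk
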